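/- arXiv:0712.1918 — 4 statements merged into one kernel-verified Lean document; each statement's English description precedes it below -/
import Mathlib

section
/- Let p be a prime with p ≡ 1 (mod 4), let n ≥ 1 and A an integer. Define S₀(A; pⁿ) = #{(x,y) ∈ (ℤ/pⁿℤ)² : x² + y² ≡ A (mod pⁿ)}. If the p-adic valuation ν_p(A) ≥ n then S₀(A; pⁿ) = pⁿ + n·pⁿ(1 − 1/p), and if ν_p(A) < n then S₀(A; pⁿ) = (1 + ν_p(A))·pⁿ(1 − 1/p). -/
/-!
Since `p ≡ 1 (mod 4)`, `-1` is a square mod `p`, and Hensel's lemma lifts its square root to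
`i` with `i ^ 2 = -1` in `ZMod (p ^ n)`. As `2` is invertible there, `(x, y) ↦ (x + i y, x - i y)`
turns solutions of `x ^ 2 + y ^ 2 = A` into solutions of `u * v = A`. Among the latter, those with
`u` a unit number `φ (p ^ n)`, while a non-unit `u` is `p * t`, which forces `p ∣ A` and
leads to the recursion `N_{m+1}(p B) = φ (p ^ (m + 1)) + p * N_m(B)` for the number `N_k(a)` of
solutions of `u * v = a` in `ZMod (p ^ k)`. Induction on `n` yields both formulas.
-/

open scoped Nat

theorem Nat.card_subtype_eq_card_and_add_card_and_not {α : Type*} [Finite α] (P Q : α → Prop) :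
    Nat.card {x // P x} = Nat.card {x // P x ∧ Q x} + Nat.card {x // P x ∧ ¬Q x} := by
  classical
  rw [← Nat.card_sum, Nat.card_congr ((Equiv.sumCompl fun x : {x // P x} => Q x).symm.trans
    (Equiv.sumCongr (Equiv.subtypeSubtypeEquivSubtypeInter P Q)
      (Equiv.subtypeSubtypeEquivSubtypeInter P (¬Q ·))))]

theorem AddMonoidHom.card_subtype_comp_mul_card {G H : Type*} [AddGroup G] [AddGroup H]
    {f : G →+ H} (hf : Function.Surjective f) (P : H → Prop) :
    Nat.card {g // P (f g)} * Nat.card H = Nat.card {h // P h} * Nat.card G := by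
  have hfib : {g // P (f g)} ≃ {h // P h} × f.ker :=
    (Equiv.sigmaSubtypeFiberEquivSubtype f fun _ => Iff.rfl).symm.trans
      (Equiv.sigmaEquivProdOfEquiv fun h => f.fiberEquivKerOfSurjective hf h)
  have hG : Nat.card f.ker * Nat.card H = Nat.card G := by
    rw [← f.ker.card_mul_index, AddSubgroup.index_ker, f.range_eq_top.mpr hf, AddSubgroup.card_top]
  rw [Nat.card_congr hfib, Nat.card_prod, mul_assoc, hG]

noncomputable def mulCount (R : Type*) [Mul R] (a : R) : ℕ :=
  Nat.card {w : R × R // w.1 * w.2 = a}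

theorem card_mul_eq_and_isUnit_fst {M : Type*} [Monoid M] (a : M) :
    Nat.card {w : M × M // w.1 * w.2 = a ∧ IsUnit w.1} = Nat.card Mˣ :=
  Nat.card_congr
    { toFun := fun w => w.2.2.unit
      invFun := fun u => ⟨(u, ↑u⁻¹ * a), u.mul_inv_cancel_left a, u.isUnit⟩
      left_inv := fun w => Subtype.ext <| Prod.ext rfl <|
        (Units.inv_mul_eq_iff_eq_mul _).2 (by rw [IsUnit.unit_spec, w.2.1])
      right_inv := fun u => Units.ext rfl }

theorem mulCount_of_isUnit {M : Type*} [CommMonoid M] {a : M} (ha : IsUnit a) :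
    mulCount M a = Nat.card Mˣ := by
  rw [mulCount, ← card_mul_eq_and_isUnit_fst a]
  exact Nat.card_congr (Equiv.subtypeEquivRight fun w =>
    ⟨fun h => ⟨h, isUnit_of_mul_isUnit_left (h ▸ ha)⟩, And.left⟩)

theorem ZMod.natCast_mul_intCast_eq_iff {N k : ℕ} (hk : k ≠ 0) (x y : ℤ) :
    (k : ZMod (N * k)) * x = k * y ↔ (x : ZMod N) = y := by
  rw [← Int.cast_natCast, ← Int.cast_mul, ← Int.cast_mul, ZMod.intCast_eq_intCast_iff_dvd_sub,
    ZMod.intCast_eq_intCast_iff_dvd_sub, ← mul_sub, Nat.cast_mul, mul_comm (N : ℤ),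
    mul_dvd_mul_iff_left (by exact_mod_cast hk)]

theorem card_sq_add_sq_eq_mulCount {R : Type*} [CommRing R] [Invertible (2 : R)] {i : R}
    (hi : i ^ 2 = -1) (a : R) :
    Nat.card {xy : R × R // xy.1 ^ 2 + xy.2 ^ 2 = a} = mulCount R a :=
  have h2 : (⅟2 : R) * 2 = 1 := invOf_mul_self 2
  Nat.card_congr
    { toFun := fun ⟨(x, y), h⟩ => ⟨(x + i * y, x - i * y), by linear_combination h - y ^ 2 * hi⟩
      invFun := fun ⟨(u, v), h⟩ => ⟨(⅟2 * (u + v), ⅟2 * i * (v - u)), by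
        linear_combination h + (⅟2 * (v - u)) ^ 2 * hi + u * v * (2 * ⅟2 + 1) * h2⟩
      left_inv := fun ⟨(x, y), _⟩ => Subtype.ext <| Prod.ext
        (by linear_combination x * h2) (by linear_combination (-2 * ⅟2 * y) * hi + y * h2)
      right_inv := fun ⟨(u, v), _⟩ => Subtype.ext <| Prod.ext
        (by linear_combination ⅟2 * (v - u) * hi + u * h2)
        (by linear_combination -⅟2 * (v - u) * hi + v * h2) }

theorem exists_sq_eq_neg_one_zmod_prime_pow {p : ℕ} [Fact p.Prime] (hp1 : p % 4 = 1) (n : ℕ) :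
    ∃ i : ZMod (p ^ n), i ^ 2 = -1 := by
  obtain ⟨y, hy⟩ := ZMod.exists_sq_eq_neg_one_iff.2 (by omega : p % 4 ≠ 3)
  obtain ⟨x, rfl⟩ := ZMod.intCast_surjective y
  have hsq : (p : ℤ) ∣ x ^ 2 + 1 := by
    rw [← ZMod.intCast_zmod_eq_zero_iff_dvd]
    push_cast
    linear_combination -hy
  have hderiv : ¬(p : ℤ) ∣ 2 * x := by
    rw [← ZMod.intCast_zmod_eq_zero_iff_dvd, Int.cast_mul, Int.cast_ofNat, mul_eq_zero, not_or]
    refine ⟨fun h2 => ?_, fun hx => by simp [hx] at hy⟩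
    have := Nat.le_of_dvd two_pos <| (ZMod.natCast_eq_zero_iff 2 p).1 (by exact_mod_cast h2)
    have := (Fact.out : p.Prime).two_le
    omega
  let F : Polynomial ℤ := Polynomial.X ^ 2 + 1
  have hF : F.aeval (x : ℤ_[p]) = ((x ^ 2 + 1 : ℤ) : ℤ_[p]) := by simp [F]
  have hF' : F.derivative.aeval (x : ℤ_[p]) = ((2 * x : ℤ) : ℤ_[p]) := by
    simp [F, map_ofNat]
  have hnorm : ‖F.aeval (x : ℤ_[p])‖ < ‖F.derivative.aeval (x : ℤ_[p])‖ ^ 2 := by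
    rw [hF, hF', le_antisymm (PadicInt.norm_le_one _)
      (not_lt.1 (mt (PadicInt.norm_int_lt_one_iff_dvd _).1 hderiv)), one_pow]
    exact (PadicInt.norm_int_lt_one_iff_dvd _).2 hsq
  obtain ⟨z, hz, -⟩ := hensels_lemma hnorm
  refine ⟨PadicInt.toZModPow n z, ?_⟩
  simp only [F, map_add, map_pow, Polynomial.aeval_X, map_one] at hz
  rw [← map_pow, eq_neg_iff_add_eq_zero, ← map_one (PadicInt.toZModPow n), ← map_add, hz,
    map_zero]

section PrimePower

variable {p : ℕ} (hp : p.Prime)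
include hp

theorem ZMod.isUnit_intCast_iff_not_dvd_pow {d : ℕ} (hd : 0 < d) (A : ℤ) :
    IsUnit (A : ZMod (p ^ d)) ↔ ¬(p : ℤ) ∣ A := by
  rw [Int.natCast_dvd, ← ZMod.isUnit_natCast_iff_not_dvd_pow hp hd]
  rcases Int.natAbs_eq A with h | h <;> rw [h] <;> simp

theorem Nat.totient_prime_pow_succ_eq_prime_mul {m : ℕ} (hm : m ≠ 0) :
    φ (p ^ (m + 1)) = p * φ (p ^ m) := by
  rw [pow_succ', Nat.totient_mul_of_prime_of_dvd hp (dvd_pow_self p hm)]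

theorem Nat.totient_prime_pow_eq_sub {n : ℕ} (hn : n ≠ 0) : φ (p ^ n) = p ^ n - p ^ (n - 1) := by
  obtain ⟨m, rfl⟩ := Nat.exists_eq_succ_of_ne_zero hn
  rw [Nat.totient_prime_pow_succ hp, Nat.mul_sub, mul_one, ← pow_succ, Nat.succ_sub_one]

theorem ZMod.prime_mul_intCast_eq_iff {m : ℕ} (x y : ℤ) :
    (p : ZMod (p ^ (m + 1))) * x = p * y ↔ (x : ZMod (p ^ m)) = y :=
  pow_succ p m ▸ ZMod.natCast_mul_intCast_eq_iff hp.ne_zero x y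

theorem ZMod.prime_mul_natCast_eq_iff {m : ℕ} (a b : ℕ) :
    (p : ZMod (p ^ (m + 1))) * a = p * b ↔ (a : ZMod (p ^ m)) = b := by
  exact_mod_cast ZMod.prime_mul_intCast_eq_iff hp (m := m) a b

theorem prime_mul_val_mul_eq_iff {m : ℕ} (B : ℤ) (t : ZMod (p ^ m)) (v : ZMod (p ^ (m + 1))) :
    (p : ZMod (p ^ (m + 1))) * t.val * v = ((p * B : ℤ) : ZMod (p ^ (m + 1))) ↔
      t * ZMod.castHom (pow_dvd_pow p m.le_succ) _ v = B := by
  have : NeZero p := ⟨hp.ne_zero⟩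
  obtain ⟨y, rfl⟩ := ZMod.intCast_surjective v
  have key := ZMod.prime_mul_intCast_eq_iff hp (m := m) (t.val * y) B
  push_cast at key ⊢
  rw [map_intCast, mul_assoc, key, ZMod.natCast_zmod_val]

/-- A non-unit of `ZMod (p ^ (m + 1))` is `p * t` for a unique `t : ZMod (p ^ m)`. -/
theorem card_mul_eq_prime_mul_and_not_isUnit_fst (m : ℕ) (B : ℤ) :
    Nat.card {w : ZMod (p ^ (m + 1)) × ZMod (p ^ (m + 1)) //
        w.1 * w.2 = ((p * B : ℤ) : ZMod (p ^ (m + 1))) ∧ ¬IsUnit w.1} =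
      Nat.card {x : ZMod (p ^ m) × ZMod (p ^ (m + 1)) //
        x.1 * ZMod.castHom (pow_dvd_pow p m.le_succ) _ x.2 = B} := by
  have : NeZero p := ⟨hp.ne_zero⟩
  refine (Nat.card_eq_of_bijective (fun x =>
    ⟨((p : ZMod (p ^ (m + 1))) * (x.1.1.val : ZMod (p ^ (m + 1))), x.1.2),
      (prime_mul_val_mul_eq_iff hp B _ _).2 x.2, fun hu => ZMod.prime_natCast_not_isUnit_pow hp
        m.succ_pos (isUnit_of_mul_isUnit_left hu)⟩) ⟨?_, ?_⟩).symm
  · rintro ⟨⟨t, v⟩, _⟩ ⟨⟨t', v'⟩, _⟩ h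
    simp only [Subtype.mk.injEq, Prod.mk.injEq, ZMod.prime_mul_natCast_eq_iff hp,
      ZMod.natCast_zmod_val] at h
    obtain ⟨rfl, rfl⟩ := h
    rfl
  · rintro ⟨⟨u, v⟩, huv, hu⟩
    rw [← ZMod.natCast_zmod_val u, ZMod.isUnit_natCast_iff_not_dvd_pow hp m.succ_pos,
      not_not] at hu
    obtain ⟨k, hk⟩ := hu
    have hu : (p : ZMod (p ^ (m + 1))) * ((k : ZMod (p ^ m)).val : ℕ) = u := by
      rw [ZMod.prime_mul_natCast_eq_iff hp (m := m) _ k |>.2 (ZMod.natCast_zmod_val _),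
        ← Nat.cast_mul, ← hk, ZMod.natCast_zmod_val]
    refine ⟨⟨((k : ZMod (p ^ m)), v), ?_⟩, ?_⟩
    · rw [← prime_mul_val_mul_eq_iff hp, hu, huv]
    · simp only [hu]

/-- Each residue modulo `p ^ m` has exactly `p` lifts modulo `p ^ (m + 1)`. -/
theorem card_fst_mul_castHom_snd_eq (m : ℕ) (B : ℤ) :
    Nat.card {x : ZMod (p ^ m) × ZMod (p ^ (m + 1)) //
      x.1 * ZMod.castHom (pow_dvd_pow p m.le_succ) _ x.2 = B} = p * mulCount (ZMod (p ^ m)) B := by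
  have : NeZero p := ⟨hp.ne_zero⟩
  let π := ZMod.castHom (pow_dvd_pow p m.le_succ) (ZMod (p ^ m))
  have hπ : Function.Surjective ((AddMonoidHom.id (ZMod (p ^ m))).prodMap π.toAddMonoidHom) :=
    Function.surjective_id.prodMap (ZMod.ringHom_surjective π)
  have h := AddMonoidHom.card_subtype_comp_mul_card hπ (fun y => y.1 * y.2 = B)
  rw [Nat.card_prod, Nat.card_prod, Nat.card_zmod, Nat.card_zmod] at h
  have hpos : 0 < p ^ m * p ^ m := Nat.mul_pos (pow_pos hp.pos m) (pow_pos hp.pos m)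
  exact Nat.eq_of_mul_eq_mul_right hpos (h.trans (by rw [mulCount, Nat.pow_succ]; ring))

theorem mulCount_zmod_prime_pow_succ_prime_mul (m : ℕ) (B : ℤ) :
    mulCount (ZMod (p ^ (m + 1))) ((p * B : ℤ) : ZMod (p ^ (m + 1))) =
      φ (p ^ (m + 1)) + p * mulCount (ZMod (p ^ m)) B := by
  have : NeZero p := ⟨hp.ne_zero⟩
  rw [mulCount, Nat.card_subtype_eq_card_and_add_card_and_not _ (fun w => IsUnit w.1),
    card_mul_eq_and_isUnit_fst, card_mul_eq_prime_mul_and_not_isUnit_fst hp,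
    card_fst_mul_castHom_snd_eq hp, Nat.card_eq_fintype_card, ZMod.card_units_eq_totient]

theorem mulCount_zmod_prime_pow_zero (n : ℕ) :
    mulCount (ZMod (p ^ n)) 0 = p ^ n + n * φ (p ^ n) := by
  induction n with
  | zero =>
    rw [pow_zero, zero_mul, add_zero, mulCount, Nat.card_eq_one_iff_unique]
    exact ⟨inferInstance, ⟨⟨0, mul_zero 0⟩⟩⟩
  | succ m ih =>
    have h := mulCount_zmod_prime_pow_succ_prime_mul hp m 0
    rw [mul_zero, Int.cast_zero, Int.cast_zero, ih] at h
    rw [h]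
    rcases eq_or_ne m 0 with rfl | hm
    · simp [add_comm]
    · rw [Nat.totient_prime_pow_succ_eq_prime_mul hp hm]
      ring

theorem mulCount_zmod_prime_pow_of_not_dvd {n : ℕ} {A : ℤ} (hA : ¬(p : ℤ) ^ n ∣ A) :
    mulCount (ZMod (p ^ n)) A = (1 + padicValInt p A) * φ (p ^ n) := by
  have : Fact p.Prime := ⟨hp⟩
  induction n generalizing A with
  | zero => exact absurd (pow_zero (p : ℤ) ▸ one_dvd A) hA
  | succ m ih =>
    by_cases hpA : (p : ℤ) ∣ A
    · obtain ⟨B, rfl⟩ := hpA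
      have hB : ¬(p : ℤ) ^ m ∣ B := fun h => hA (pow_succ' (p : ℤ) m ▸ mul_dvd_mul_left _ h)
      have hm : m ≠ 0 := by rintro rfl; simp at hB
      have hB0 : B ≠ 0 := by rintro rfl; simp at hB
      rw [mulCount_zmod_prime_pow_succ_prime_mul hp, ih hB, mul_comm (p : ℤ) B,
        padicValInt_mul_eq_succ B hB0, Nat.totient_prime_pow_succ_eq_prime_mul hp hm]
      ring
    · rw [mulCount_of_isUnit ((ZMod.isUnit_intCast_iff_not_dvd_pow hp m.succ_pos A).2 hpA),
        Nat.card_eq_fintype_card, ZMod.card_units_eq_totient, padicValInt.eq_zero_of_not_dvd hpA,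
        add_zero, one_mul]

end PrimePower

theorem count_sum_two_squares_mod_p_one_mod_four_general (p n : ℕ) (hp : p.Prime)
    (hp1 : p % 4 = 1) (A : ℤ) :
    (((p : ℤ) ^ n ∣ A →
      Nat.card {xy : ZMod (p ^ n) × ZMod (p ^ n) // xy.1 ^ 2 + xy.2 ^ 2 = (A : ZMod (p ^ n))}
        = p ^ n + n * (p ^ n - p ^ (n - 1)))
    ∧ (¬ (p : ℤ) ^ n ∣ A →
      Nat.card {xy : ZMod (p ^ n) × ZMod (p ^ n) // xy.1 ^ 2 + xy.2 ^ 2 = (A : ZMod (p ^ n))}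
        = (1 + padicValInt p A) * (p ^ n - p ^ (n - 1)))) := by
  have : Fact p.Prime := ⟨hp⟩
  obtain ⟨i, hi⟩ := exists_sq_eq_neg_one_zmod_prime_pow hp1 n
  have h2 : IsUnit (2 : ZMod (p ^ n)) := by
    exact_mod_cast (ZMod.isUnit_iff_coprime 2 (p ^ n)).2 <|
      (Nat.coprime_two_left.2 (Nat.odd_iff.2 (by omega))).pow_right n
  let _ : Invertible (2 : ZMod (p ^ n)) := h2.invertible
  rw [card_sq_add_sq_eq_mulCount hi]
  refine ⟨fun hA => ?_, fun hA => ?_⟩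
  · rw [(ZMod.intCast_zmod_eq_zero_iff_dvd A (p ^ n)).2 (mod_cast hA),
      mulCount_zmod_prime_pow_zero hp]
    rcases eq_or_ne n 0 with rfl | hn
    · simp
    · rw [Nat.totient_prime_pow_eq_sub hp hn]
  · have hn : n ≠ 0 := by rintro rfl; simp at hA
    rw [mulCount_zmod_prime_pow_of_not_dvd hp hA, Nat.totient_prime_pow_eq_sub hp hn]

/-- The count `S₀(A; pⁿ)` of solutions of `x² + y² ≡ A (mod pⁿ)` for a prime `p ≡ 1 (mod 4)`. -/
theorem count_sum_two_squares_mod_p_one_mod_four (p n : ℕ) (hp : p.Prime)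
    (hp1 : p % 4 = 1) (hn : 1 ≤ n) (A : ℤ) :
    (((p : ℤ) ^ n ∣ A →
      Nat.card {xy : ZMod (p ^ n) × ZMod (p ^ n) // xy.1 ^ 2 + xy.2 ^ 2 = (A : ZMod (p ^ n))}
        = p ^ n + n * (p ^ n - p ^ (n - 1)))
    ∧ (¬ (p : ℤ) ^ n ∣ A →
      Nat.card {xy : ZMod (p ^ n) × ZMod (p ^ n) // xy.1 ^ 2 + xy.2 ^ 2 = (A : ZMod (p ^ n))}
        = (1 + padicValInt p A) * (p ^ n - p ^ (n - 1)))) :=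
  count_sum_two_squares_mod_p_one_mod_four_general p n hp hp1 A
end

section
/- Let p be a prime with p ≡ 3 (mod 4), let n ≥ 1 and A an integer. Define S₀(A; pⁿ) = #{(x,y) ∈ (ℤ/pⁿℤ)² : x² + y² ≡ A (mod pⁿ)}. Then S₀(A; pⁿ) = p^{2⌊n/2⌋} if ν_p(A) ≥ n; S₀(A; pⁿ) = pⁿ(1 + 1/p) if ν_p(A) < n and ν_p(A) is even; and S₀(A; pⁿ) = 0 if ν_p(A) < n and ν_p(A) is odd. -/
/-!
Since `-1` is not a square modulo `p`, `p ∣ x² + y²` forces `p ∣ x` and `p ∣ y`. Hence, if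
`p² ∣ A`, the solutions modulo `pⁿ⁺²` are `p` times the `p²` lifts modulo `pⁿ⁺¹` of each solution
of `x² + y² ≡ A / p²` modulo `pⁿ`, and if `p ∥ A` there is no solution modulo `p²`. This reduces
everything to `p ∤ A`. Modulo `p` the count is then `p + 1`: multiplication by a Gaussian integer
`u + vi` of norm `a` maps the circle `x² + y² = c` onto `x² + y² = ac`, so the `p² - 1` points off
the origin are evenly spread over the `p - 1` nonzero circles. From `pⁿ` to `pⁿ⁺¹` the count is
multiplied by `p`: a solution has a coordinate prime to `p`, so the condition on its `p²` lifts is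
a nondegenerate linear equation modulo `p`.
-/

open Finset

section Field

variable {F : Type*} [Field F]

theorem eq_zero_and_eq_zero_of_sq_add_sq_eq_zero (hF : ¬IsSquare (-1 : F)) {x y : F}
    (h : x ^ 2 + y ^ 2 = 0) : x = 0 ∧ y = 0 := by
  have key : ∀ u v : F, u ^ 2 + v ^ 2 = 0 → v = 0 := fun u v huv => by
    by_contra hv
    exact hF ⟨u / v, by field_simp; linear_combination -huv⟩
  exact ⟨key y x (by linear_combination h), key x y h⟩

variable [Fintype F] [DecidableEq F]

theorem card_add_mul_add_mul_eq_zero {a b : F} (hab : a ≠ 0 ∨ b ≠ 0) (c : F) :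
    #{w : F × F | c + a * w.1 + b * w.2 = 0} = Fintype.card F := by
  rw [← card_univ]
  rcases hab with ha | hb
  · refine card_nbij' (·.2) (fun t => (-(c + b * t) / a, t)) (fun _ _ => mem_coe.2 (mem_univ _))
      (fun t _ => ?_) (fun w hw => ?_) (fun _ _ => rfl)
    · simp only [coe_filter, mem_univ, true_and, Set.mem_ofPred_eq]
      field_simp
      ring
    · simp only [coe_filter, mem_univ, true_and, Set.mem_ofPred_eq] at hw
      ext
      · rw [div_eq_iff ha]; linear_combination -hw
      · rfl
  · refine card_nbij' (·.1) (fun s => (s, -(c + a * s) / b)) (fun _ _ => mem_coe.2 (mem_univ _))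
      (fun s _ => ?_) (fun w hw => ?_) (fun _ _ => rfl)
    · simp only [coe_filter, mem_univ, true_and, Set.mem_ofPred_eq]
      field_simp
      ring
    · simp only [coe_filter, mem_univ, true_and, Set.mem_ofPred_eq] at hw
      ext
      · rfl
      · rw [div_eq_iff hb]; linear_combination -hw

-- `(x, y) ↦ (ux - vy, uy + vx)` is multiplication by `u + vi`, which multiplies `x² + y²` by `a`
theorem card_sq_add_sq_eq_mul {a : F} (ha : a ≠ 0) {u v : F} (huv : u ^ 2 + v ^ 2 = a) (c : F) :
    #{w : F × F | w.1 ^ 2 + w.2 ^ 2 = c} = #{w : F × F | w.1 ^ 2 + w.2 ^ 2 = a * c} := by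
  refine card_nbij' (fun w => (u * w.1 - v * w.2, u * w.2 + v * w.1))
    (fun w => ((u * w.1 + v * w.2) / a, (u * w.2 - v * w.1) / a)) ?_ ?_ ?_ ?_ <;>
    rintro ⟨x, y⟩ hxy <;>
    simp only [coe_filter, mem_univ, true_and, Set.mem_ofPred_eq] at hxy ⊢
  · linear_combination (x ^ 2 + y ^ 2) * huv + a * hxy
  · field_simp
    linear_combination (x ^ 2 + y ^ 2) * huv + a * hxy
  · ext <;> rw [div_eq_iff ha]
    · linear_combination x * huv
    · linear_combination y * huv
  · ext <;> field_simp
    · linear_combination x * huv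
    · linear_combination y * huv

end Field

namespace ZMod

variable {p : ℕ} [Fact p.Prime]

theorem card_sq_add_sq_eq_zero (hp3 : p % 4 = 3) :
    #{w : ZMod p × ZMod p | w.1 ^ 2 + w.2 ^ 2 = 0} = 1 := by
  rw [card_eq_one]
  refine ⟨(0, 0), eq_singleton_iff_unique_mem.2 ⟨by simp, fun w hw => ?_⟩⟩
  obtain ⟨h1, h2⟩ := eq_zero_and_eq_zero_of_sq_add_sq_eq_zero
    (exists_sq_eq_neg_one_iff.not.2 (not_not.2 hp3)) (mem_filter.1 hw).2
  exact Prod.ext h1 h2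

theorem card_sq_add_sq_eq_of_ne_zero (hp3 : p % 4 = 3) {a : ZMod p} (ha : a ≠ 0) :
    #{w : ZMod p × ZMod p | w.1 ^ 2 + w.2 ^ 2 = a} = p + 1 := by
  set S : ZMod p → ℕ := fun b => #{w : ZMod p × ZMod p | w.1 ^ 2 + w.2 ^ 2 = b}
  have hfiber : ∀ b ≠ 0, S b = S 1 := fun b hb => by
    obtain ⟨u, v, huv⟩ := sq_add_sq p b
    simpa using (card_sq_add_sq_eq_mul hb huv 1).symm
  have htotal : 1 + (p - 1) * S 1 = p ^ 2 := by
    have h := card_eq_sum_card_fiberwise (s := univ) (t := univ)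
      (f := fun w : ZMod p × ZMod p => w.1 ^ 2 + w.2 ^ 2) (fun _ _ => mem_univ _)
    rw [← add_sum_erase _ _ (mem_univ 0), sum_congr rfl fun b hb => hfiber b (ne_of_mem_erase hb),
      sum_const, card_erase_of_mem (mem_univ _), smul_eq_mul] at h
    simp only [card_univ, Fintype.card_prod, ZMod.card] at h
    rw [card_sq_add_sq_eq_zero hp3, ← sq] at h
    exact h.symm
  have hp := (Fact.out : p.Prime).two_le
  change S a = p + 1
  rw [hfiber a ha]
  refine Nat.eq_of_mul_eq_mul_left (show 0 < p - 1 by omega) ?_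
  obtain ⟨m, rfl⟩ : ∃ m, p = m + 1 := ⟨p - 1, by omega⟩
  rw [Nat.add_sub_cancel] at htotal ⊢
  linear_combination htotal

end ZMod

theorem Int.dvd_and_dvd_of_dvd_sq_add_sq {p : ℕ} [Fact p.Prime] (hp3 : p % 4 = 3) {x y : ℤ}
    (h : (p : ℤ) ∣ x ^ 2 + y ^ 2) : (p : ℤ) ∣ x ∧ (p : ℤ) ∣ y := by
  simp only [← ZMod.intCast_zmod_eq_zero_iff_dvd] at h ⊢
  push_cast at h
  exact eq_zero_and_eq_zero_of_sq_add_sq_eq_zero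
    (ZMod.exists_sq_eq_neg_one_iff.not.2 (not_not.2 hp3)) h

theorem Int.sq_dvd_sq_add_sq_of_dvd {p : ℕ} [Fact p.Prime] (hp3 : p % 4 = 3) {x y : ℤ}
    (h : (p : ℤ) ∣ x ^ 2 + y ^ 2) : (p : ℤ) ^ 2 ∣ x ^ 2 + y ^ 2 := by
  obtain ⟨⟨a, rfl⟩, ⟨b, rfl⟩⟩ := Int.dvd_and_dvd_of_dvd_sq_add_sq hp3 h
  exact ⟨a ^ 2 + b ^ 2, by ring⟩

theorem Int.dvd_of_dvd_two_mul {p : ℕ} [Fact p.Prime] (hp2 : p ≠ 2)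
    {x : ℤ} (h : (p : ℤ) ∣ 2 * x) : (p : ℤ) ∣ x := by
  refine ((Nat.prime_iff_prime_int.1 Fact.out).dvd_or_dvd h).resolve_left fun h2 => hp2 ?_
  exact (Nat.prime_dvd_prime_iff_eq Fact.out Nat.prime_two).1 (by exact_mod_cast h2)

theorem padicValInt_lt_of_not_pow_dvd {p n : ℕ} {A : ℤ} (hA : ¬(p : ℤ) ^ n ∣ A) :
    padicValInt p A < n := by
  by_contra h
  exact hA ((pow_dvd_pow _ (not_lt.1 h)).trans (padicValInt_dvd A))

theorem exists_eq_pow_padicValInt_mul_not_dvd {p : ℕ} [Fact p.Prime] {A : ℤ} (hA : A ≠ 0) :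
    ∃ B, A = p ^ padicValInt p A * B ∧ ¬(p : ℤ) ∣ B := by
  obtain ⟨B, hB⟩ := padicValInt_dvd (p := p) A
  refine ⟨B, hB, fun ⟨C, hC⟩ => ?_⟩
  have := (padicValInt_dvd_iff (p := p) (padicValInt p A + 1) A).1
    ⟨C, hB.trans (by rw [hC]; ring)⟩
  omega

theorem sum_range_mul {M : Type*} [AddCommMonoid M] (q m : ℕ) (f : ℕ → M) :
    ∑ z ∈ range (q * m), f z = ∑ v ∈ range q, ∑ s ∈ range m, f (v + q * s) := by
  induction m with
  | zero => simp
  | succ m ih =>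
    rw [mul_add_one, sum_range_add, ih]
    simp only [sum_range_succ, sum_add_distrib, add_comm]

theorem sum_range_mul_sq {M : Type*} [AddCommMonoid M] (q m : ℕ) (f : ℕ × ℕ → M) :
    ∑ z ∈ range (q * m) ×ˢ range (q * m), f z =
      ∑ v ∈ range q ×ˢ range q, ∑ st ∈ range m ×ˢ range m,
        f (v.1 + q * st.1, v.2 + q * st.2) := by
  simp only [sum_product, sum_range_mul]
  exact sum_congr rfl fun _ _ => sum_comm

theorem card_filter_range_mul_sq_eq_mul {q m c : ℕ} {P Q : ℕ × ℕ → Prop} [DecidablePred P]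
    [DecidablePred Q]
    (hlift : ∀ v, #{st ∈ range m ×ˢ range m | P (v.1 + q * st.1, v.2 + q * st.2)} =
      if Q v then c else 0) :
    #{z ∈ range (q * m) ×ˢ range (q * m) | P z} = c * #{v ∈ range q ×ˢ range q | Q v} := by
  rw [card_filter, sum_range_mul_sq]
  simp only [← card_filter, hlift]
  rw [← sum_filter, sum_const, smul_eq_mul, mul_comm]

theorem card_filter_range_sq_eq_card {q : ℕ} [NeZero q] (P : ZMod q × ZMod q → Prop)
    [DecidablePred P] :
    #{z ∈ range q ×ˢ range q | P ((z.1 : ZMod q), (z.2 : ZMod q))} =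
      #{w : ZMod q × ZMod q | P w} := by
  refine card_nbij' (fun z => ((z.1 : ZMod q), (z.2 : ZMod q))) (fun w => (w.1.val, w.2.val))
    ?_ ?_ ?_ ?_ <;> rintro ⟨x, y⟩ h <;>
    simp_all [ZMod.val_lt, Nat.mod_eq_of_lt]

theorem card_filter_range_sq_dvd_add_mul_add_mul {p : ℕ} [Fact p.Prime] {a b : ℤ}
    (hab : ¬((p : ℤ) ∣ a ∧ (p : ℤ) ∣ b)) (c : ℤ) :
    #{st ∈ range p ×ˢ range p | (p : ℤ) ∣ c + a * st.1 + b * st.2} = p := by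
  have hab' : (a : ZMod p) ≠ 0 ∨ (b : ZMod p) ≠ 0 := by
    simpa only [ne_eq, ZMod.intCast_zmod_eq_zero_iff_dvd, ← not_and_or] using hab
  calc _ = #{w : ZMod p × ZMod p | (c : ZMod p) + a * w.1 + b * w.2 = 0} := by
        rw [← card_filter_range_sq_eq_card]
        congr 1
        ext st
        simp only [mem_filter, ← ZMod.intCast_zmod_eq_zero_iff_dvd]
        push_cast
        rfl
    _ = p := by rw [card_add_mul_add_mul_eq_zero hab', ZMod.card]

-- `S₀(A; q)` over the representatives `0 ≤ x, y < q`, so that the lifts of `x` to `q * m` are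
-- the `x + q * s` with `s < m`.
def sqAddSqCount (q : ℕ) (A : ℤ) : ℕ :=
  #{z ∈ range q ×ˢ range q | (q : ℤ) ∣ (z.1 : ℤ) ^ 2 + (z.2 : ℤ) ^ 2 - A}

theorem sqAddSqCount_eq_card (q : ℕ) [NeZero q] (A : ℤ) :
    sqAddSqCount q A = #{w : ZMod q × ZMod q | w.1 ^ 2 + w.2 ^ 2 = (A : ZMod q)} := by
  rw [sqAddSqCount, ← card_filter_range_sq_eq_card]
  congr 1
  ext z
  simp only [mem_filter, ← ZMod.intCast_zmod_eq_zero_iff_dvd]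
  push_cast
  rw [sub_eq_zero]

theorem sqAddSqCount_congr {q : ℕ} {A A' : ℤ} (h : (q : ℤ) ∣ A - A') :
    sqAddSqCount q A = sqAddSqCount q A' := by
  unfold sqAddSqCount
  congr 1
  ext z
  simp only [mem_filter]
  refine and_congr_right fun _ => ?_
  rw [show (z.1 : ℤ) ^ 2 + (z.2 : ℤ) ^ 2 - A = (z.1 : ℤ) ^ 2 + (z.2 : ℤ) ^ 2 - A' - (A - A') by
    ring, dvd_sub_left h]

theorem sqAddSqCount_one (A : ℤ) : sqAddSqCount 1 A = 1 := by
  simp [sqAddSqCount]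

theorem card_filter_range_mul_sq_dvd (q m : ℕ) (B : ℤ) :
    #{z ∈ range (q * m) ×ˢ range (q * m) | (q : ℤ) ∣ (z.1 : ℤ) ^ 2 + (z.2 : ℤ) ^ 2 - B} =
      m ^ 2 * sqAddSqCount q B := by
  refine card_filter_range_mul_sq_eq_mul fun v => ?_
  have hperiodic : ∀ st : ℕ × ℕ,
      (q : ℤ) ∣ ((v.1 + q * st.1 : ℕ) : ℤ) ^ 2 + ((v.2 + q * st.2 : ℕ) : ℤ) ^ 2 - B ↔
        (q : ℤ) ∣ (v.1 : ℤ) ^ 2 + (v.2 : ℤ) ^ 2 - B := fun st => by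
    push_cast
    rw [show ((v.1 : ℤ) + q * st.1) ^ 2 + ((v.2 : ℤ) + q * st.2) ^ 2 - B =
      (v.1 : ℤ) ^ 2 + (v.2 : ℤ) ^ 2 - B
        + q * (2 * v.1 * st.1 + 2 * v.2 * st.2 + q * (st.1 ^ 2 + st.2 ^ 2)) by ring]
    exact dvd_add_left (dvd_mul_right _ _)
  simp only [hperiodic]
  split_ifs with h
  · rw [filter_true_of_mem fun _ _ => h, card_product, card_range, sq]
  · rw [filter_false_of_mem fun _ _ => h, card_empty]

section Prime

variable {p : ℕ} [Fact p.Prime]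

theorem sqAddSqCount_prime_of_dvd (hp3 : p % 4 = 3) {A : ℤ} (hA : (p : ℤ) ∣ A) :
    sqAddSqCount p A = 1 := by
  rw [sqAddSqCount_eq_card, (ZMod.intCast_zmod_eq_zero_iff_dvd A p).2 hA,
    ZMod.card_sq_add_sq_eq_zero hp3]

theorem sqAddSqCount_prime_of_not_dvd (hp3 : p % 4 = 3) {A : ℤ} (hA : ¬(p : ℤ) ∣ A) :
    sqAddSqCount p A = p + 1 := by
  rw [sqAddSqCount_eq_card, ZMod.card_sq_add_sq_eq_of_ne_zero hp3]
  rwa [Ne, ZMod.intCast_zmod_eq_zero_iff_dvd]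

-- As `2n ≥ n + 1`, the condition on the lift `(x + pⁿs, y + pⁿt)` is linear in `(s, t)` modulo `p`.
theorem card_filter_lift_sq_add_sq (hp2 : p ≠ 2) {n : ℕ} (hn : 1 ≤ n) {A : ℤ}
    (hA : ¬(p : ℤ) ∣ A) (x y : ℤ) :
    #{st ∈ range p ×ˢ range p |
        (p : ℤ) ^ (n + 1) ∣ (x + p ^ n * st.1) ^ 2 + (y + p ^ n * st.2) ^ 2 - A} =
      if (p : ℤ) ^ n ∣ x ^ 2 + y ^ 2 - A then p else 0 := by
  obtain ⟨n, rfl⟩ := Nat.exists_eq_add_of_le' hn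
  have hp0 : (p : ℤ) ≠ 0 := by exact_mod_cast (Fact.out : p.Prime).ne_zero
  have hexpand : ∀ s t : ℤ, (x + p ^ (n + 1) * s) ^ 2 + (y + p ^ (n + 1) * t) ^ 2 - A =
      (x ^ 2 + y ^ 2 - A) + p ^ (n + 1) * (2 * x * s + 2 * y * t)
        + p ^ (n + 1 + 1) * (p ^ n * (s ^ 2 + t ^ 2)) := fun s t => by ring
  split_ifs with hd
  · obtain ⟨k, hk⟩ := hd
    have hlinear : ∀ s t : ℤ,
        (p : ℤ) ^ (n + 1 + 1) ∣ (x + p ^ (n + 1) * s) ^ 2 + (y + p ^ (n + 1) * t) ^ 2 - A ↔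
          (p : ℤ) ∣ k + 2 * x * s + 2 * y * t := fun s t => by
      rw [hexpand, dvd_add_left (dvd_mul_right _ _), hk, ← mul_add, pow_succ _ (n + 1),
        ← add_assoc, mul_dvd_mul_iff_left (pow_ne_zero _ hp0)]
    simp only [hlinear]
    refine card_filter_range_sq_dvd_add_mul_add_mul (fun ⟨h2x, h2y⟩ => hA ?_) k
    have hx := Int.dvd_of_dvd_two_mul hp2 h2x
    have hy := Int.dvd_of_dvd_two_mul hp2 h2y
    rw [show A = x ^ 2 + y ^ 2 - p ^ (n + 1) * k by linear_combination -hk]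
    exact dvd_sub (dvd_add (dvd_pow hx two_ne_zero) (dvd_pow hy two_ne_zero))
      (dvd_mul_of_dvd_left (dvd_pow_self _ n.succ_ne_zero) _)
  · rw [card_eq_zero, filter_eq_empty_iff]
    intro st _ h
    rw [hexpand] at h
    have h' := (pow_dvd_pow (p : ℤ) (n + 1).le_succ).trans h
    rw [dvd_add_left (dvd_mul_of_dvd_left (pow_dvd_pow _ (n + 1).le_succ) _),
      dvd_add_left (dvd_mul_right _ _)] at h'
    exact hd h'

theorem sqAddSqCount_pow_succ_of_not_dvd (hp2 : p ≠ 2) {A : ℤ} (hA : ¬(p : ℤ) ∣ A) {n : ℕ}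
    (hn : 1 ≤ n) : sqAddSqCount (p ^ (n + 1)) A = p * sqAddSqCount (p ^ n) A := by
  unfold sqAddSqCount
  rw [pow_succ]
  refine card_filter_range_mul_sq_eq_mul fun v => ?_
  push_cast
  rw [← pow_succ]
  exact card_filter_lift_sq_add_sq hp2 hn hA v.1 v.2

theorem sqAddSqCount_pow_add_two_sq_mul (hp3 : p % 4 = 3) (n : ℕ) (B : ℤ) :
    sqAddSqCount (p ^ (n + 2)) (p ^ 2 * B) = p ^ 2 * sqAddSqCount (p ^ n) B := by
  have hp := (Fact.out : p.Prime).pos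
  have hlt : ∀ x : ℕ, p * x < p ^ (n + 2) ↔ x < p ^ n * p := fun x => by
    rw [show p ^ (n + 2) = p * (p ^ n * p) by ring, Nat.mul_lt_mul_left hp]
  have hcond : ∀ x y : ℕ,
      ((p ^ (n + 2) : ℕ) : ℤ) ∣ ((p * x : ℕ) : ℤ) ^ 2 + ((p * y : ℕ) : ℤ) ^ 2 - p ^ 2 * B ↔
        ((p ^ n : ℕ) : ℤ) ∣ (x : ℤ) ^ 2 + (y : ℤ) ^ 2 - B := fun x y => by
    push_cast
    rw [show (p * x : ℤ) ^ 2 + (p * y) ^ 2 - p ^ 2 * B = p ^ 2 * (x ^ 2 + y ^ 2 - B) by ring,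
      pow_add, mul_comm, mul_dvd_mul_iff_left (pow_ne_zero _ (Nat.cast_ne_zero.2 hp.ne'))]
  have hsol : ∀ x y : ℕ, ((p ^ (n + 2) : ℕ) : ℤ) ∣ (x : ℤ) ^ 2 + (y : ℤ) ^ 2 - p ^ 2 * B →
      p ∣ x ∧ p ∣ y := fun x y h => by
    push_cast at h
    have h' := (dvd_pow_self (p : ℤ) (n + 1).succ_ne_zero).trans h
    rw [dvd_sub_left (dvd_mul_of_dvd_left (dvd_pow_self _ two_ne_zero) _)] at h'
    exact_mod_cast Int.dvd_and_dvd_of_dvd_sq_add_sq hp3 h'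
  rw [← card_filter_range_mul_sq_dvd, sqAddSqCount]
  refine card_nbij' (fun z => (z.1 / p, z.2 / p)) (fun w => (p * w.1, p * w.2)) ?_ ?_ ?_ ?_
  · rintro ⟨_, _⟩ hz
    obtain ⟨⟨x, rfl⟩, ⟨y, rfl⟩⟩ := hsol _ _ (mem_filter.1 hz).2
    simpa only [coe_filter, mem_product, mem_range, Set.mem_ofPred_eq, hlt, hcond,
      Nat.mul_div_cancel_left _ hp] using hz
  · rintro ⟨x, y⟩ hw
    simpa only [coe_filter, mem_product, mem_range, Set.mem_ofPred_eq, hlt, hcond] using hw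
  · rintro ⟨_, _⟩ hz
    obtain ⟨⟨x, rfl⟩, ⟨y, rfl⟩⟩ := hsol _ _ (mem_filter.1 hz).2
    simp only [Nat.mul_div_cancel_left _ hp]
  · intro w _
    simp only [Nat.mul_div_cancel_left _ hp]

theorem sqAddSqCount_eq_zero_of_dvd_of_not_sq_dvd (hp3 : p % 4 = 3) {q : ℕ} (hq : p ^ 2 ∣ q)
    {A : ℤ} (h1 : (p : ℤ) ∣ A) (h2 : ¬(p : ℤ) ^ 2 ∣ A) : sqAddSqCount q A = 0 := by
  rw [sqAddSqCount, card_eq_zero, filter_eq_empty_iff]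
  intro z _ hz
  have hq' : (p : ℤ) ^ 2 ∣ q := by exact_mod_cast hq
  have hsq := Int.sq_dvd_sq_add_sq_of_dvd hp3
    ((dvd_sub_left h1).1 ((dvd_pow_self _ two_ne_zero).trans (hq'.trans hz)))
  exact h2 ((dvd_sub_right hsq).1 (hq'.trans hz))

theorem sqAddSqCount_pow_add_two_mul_pow_mul (hp3 : p % 4 = 3) (n k : ℕ) (B : ℤ) :
    sqAddSqCount (p ^ (n + 2 * k)) (p ^ (2 * k) * B) = p ^ (2 * k) * sqAddSqCount (p ^ n) B := by
  induction k with
  | zero => simp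
  | succ k ih =>
    rw [show n + 2 * (k + 1) = n + 2 * k + 2 by ring,
      show (p : ℤ) ^ (2 * (k + 1)) * B = p ^ 2 * (p ^ (2 * k) * B) by ring,
      sqAddSqCount_pow_add_two_sq_mul hp3, ih]
    ring

theorem sqAddSqCount_pow_of_not_dvd (hp3 : p % 4 = 3) {A : ℤ} (hA : ¬(p : ℤ) ∣ A) {n : ℕ}
    (hn : 1 ≤ n) : sqAddSqCount (p ^ n) A = p ^ n + p ^ (n - 1) := by
  induction n, hn using Nat.le_induction with
  | base => rw [pow_one, sqAddSqCount_prime_of_not_dvd hp3 hA, Nat.sub_self, pow_zero]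
  | succ n hn ih =>
    rw [sqAddSqCount_pow_succ_of_not_dvd (by omega) hA hn, ih]
    obtain ⟨m, rfl⟩ := Nat.exists_eq_add_of_le' hn
    simp only [Nat.add_sub_cancel]
    ring

theorem sqAddSqCount_pow_of_pow_dvd (hp3 : p % 4 = 3) {n : ℕ} {A : ℤ} (hA : (p : ℤ) ^ n ∣ A) :
    sqAddSqCount (p ^ n) A = p ^ (2 * (n / 2)) := by
  have h := sqAddSqCount_pow_add_two_mul_pow_mul hp3 (n % 2) (n / 2) 0
  rw [Nat.mod_add_div, mul_zero] at h
  rw [sqAddSqCount_congr (A' := 0) (by simpa using hA), h]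
  rcases Nat.mod_two_eq_zero_or_one n with h2 | h2 <;> rw [h2]
  · rw [pow_zero, sqAddSqCount_one, mul_one]
  · rw [pow_one, sqAddSqCount_prime_of_dvd hp3 (dvd_zero _), mul_one]

theorem sqAddSqCount_pow_of_even_padicValInt (hp3 : p % 4 = 3) {n : ℕ} {A : ℤ}
    (hA : ¬(p : ℤ) ^ n ∣ A) (he : Even (padicValInt p A)) :
    sqAddSqCount (p ^ n) A = p ^ n + p ^ (n - 1) := by
  obtain ⟨B, hAB, hB⟩ := exists_eq_pow_padicValInt_mul_not_dvd (p := p) (A := A)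
    (by rintro rfl; simp at hA)
  have hlt := padicValInt_lt_of_not_pow_dvd hA
  obtain ⟨k, hk⟩ := he
  obtain ⟨m, rfl⟩ : ∃ m, n = m + 1 + 2 * k := ⟨n - 1 - 2 * k, by omega⟩
  rw [hAB, hk, ← two_mul, sqAddSqCount_pow_add_two_mul_pow_mul hp3,
    sqAddSqCount_pow_of_not_dvd hp3 hB le_add_self, show m + 1 + 2 * k - 1 = m + 2 * k by omega]
  simp only [Nat.add_sub_cancel]
  ring

theorem sqAddSqCount_pow_of_odd_padicValInt (hp3 : p % 4 = 3) {n : ℕ} {A : ℤ}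
    (hA : ¬(p : ℤ) ^ n ∣ A) (ho : Odd (padicValInt p A)) : sqAddSqCount (p ^ n) A = 0 := by
  obtain ⟨B, hAB, hB⟩ := exists_eq_pow_padicValInt_mul_not_dvd (p := p) (A := A)
    (by rintro rfl; simp at hA)
  have hlt := padicValInt_lt_of_not_pow_dvd hA
  obtain ⟨k, hk⟩ := ho
  obtain ⟨m, rfl⟩ : ∃ m, n = m + 2 + 2 * k := ⟨n - 2 - 2 * k, by omega⟩
  rw [hAB, hk, pow_succ, mul_assoc, sqAddSqCount_pow_add_two_mul_pow_mul hp3,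
    sqAddSqCount_eq_zero_of_dvd_of_not_sq_dvd hp3 (pow_dvd_pow _ le_add_self) (dvd_mul_right _ _),
    mul_zero]
  rw [sq, mul_dvd_mul_iff_left (Nat.cast_ne_zero.2 (Fact.out : p.Prime).ne_zero)]
  exact hB

end Prime

theorem count_sum_two_squares_mod_p_three_mod_four_general (p n : ℕ) (hp : p.Prime)
    (hp3 : p % 4 = 3) (A : ℤ) :
    (((p : ℤ) ^ n ∣ A →
      Nat.card {xy : ZMod (p ^ n) × ZMod (p ^ n) // xy.1 ^ 2 + xy.2 ^ 2 = (A : ZMod (p ^ n))}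
        = p ^ (2 * (n / 2)))
    ∧ (¬ (p : ℤ) ^ n ∣ A → Even (padicValInt p A) →
      Nat.card {xy : ZMod (p ^ n) × ZMod (p ^ n) // xy.1 ^ 2 + xy.2 ^ 2 = (A : ZMod (p ^ n))}
        = p ^ n + p ^ (n - 1))
    ∧ (¬ (p : ℤ) ^ n ∣ A → Odd (padicValInt p A) →
      Nat.card {xy : ZMod (p ^ n) × ZMod (p ^ n) // xy.1 ^ 2 + xy.2 ^ 2 = (A : ZMod (p ^ n))}
        = 0)) := by
  have : Fact p.Prime := ⟨hp⟩
  simp only [Nat.card_eq_fintype_card, Fintype.card_subtype, ← sqAddSqCount_eq_card]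
  exact ⟨sqAddSqCount_pow_of_pow_dvd hp3, sqAddSqCount_pow_of_even_padicValInt hp3,
    sqAddSqCount_pow_of_odd_padicValInt hp3⟩

/-- The count `S₀(A; pⁿ)` of solutions of `x² + y² ≡ A (mod pⁿ)` for a prime `p ≡ 3 (mod 4)`. -/
theorem count_sum_two_squares_mod_p_three_mod_four (p n : ℕ) (hp : p.Prime)
    (hp3 : p % 4 = 3) (hn : 1 ≤ n) (A : ℤ) :
    (((p : ℤ) ^ n ∣ A →
      Nat.card {xy : ZMod (p ^ n) × ZMod (p ^ n) // xy.1 ^ 2 + xy.2 ^ 2 = (A : ZMod (p ^ n))}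
        = p ^ (2 * (n / 2)))
    ∧ (¬ (p : ℤ) ^ n ∣ A → Even (padicValInt p A) →
      Nat.card {xy : ZMod (p ^ n) × ZMod (p ^ n) // xy.1 ^ 2 + xy.2 ^ 2 = (A : ZMod (p ^ n))}
        = p ^ n + p ^ (n - 1))
    ∧ (¬ (p : ℤ) ^ n ∣ A → Odd (padicValInt p A) →
      Nat.card {xy : ZMod (p ^ n) × ZMod (p ^ n) // xy.1 ^ 2 + xy.2 ^ 2 = (A : ZMod (p ^ n))}
        = 0)) :=
  count_sum_two_squares_mod_p_three_mod_four_general p n hp hp3 A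
end

section
/- Let p ≡ 1 (mod 4) be prime, α ≤ ν_p(A) < n where A is an integer. Then S_α(A; pⁿ) = (1 + ν_p(A) − α)·p^{n+α}·(1 − 1/p), where S_α(A; pⁿ) = #{(x, y) ∈ (ℤ/pⁿℤ)² : p^α(x² + y²) ≡ A (mod pⁿ)}. -/
/-!
Since `p ≡ 1 (mod 4)`, `-1` is a square mod `p`, and by Hensel's lemma it has a square root `j`
in `ZMod (p ^ n)`. As `2` is a unit, `(x, y) ↦ (x + j y, x - j y)` is a bijection turning
`x ^ 2 + y ^ 2` into `s * t`, so we count solutions of `p ^ α * s * t = A` instead. For fixed `s`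
this is a linear congruence, and `c t = b` has `p ^ v(c)` solutions modulo `p ^ n` when
`v(c) ≤ v(b)` and none otherwise. With `ν = v(A)`, each `s` of valuation `k ≤ ν - α` contributes
`p ^ (α + k)`, and there are `p ^ (n - k) - p ^ (n - k - 1)` such `s`: every admissible `k`
contributes `p ^ (n + α) - p ^ (n + α - 1)`.
-/

open Finset

open Polynomial in
theorem PadicInt.exists_sq_eq_neg_one {p : ℕ} [hp : Fact p.Prime] (hp1 : p % 4 = 1) :
    ∃ z : ℤ_[p], z ^ 2 = -1 := by
  have mem_max (x : ℤ_[p]) : x ∈ IsLocalRing.maximalIdeal ℤ_[p] ↔ toZMod x = 0 := by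
    rw [← ker_toZMod, RingHom.mem_ker]
  obtain ⟨r, hr⟩ := ZMod.exists_sq_eq_neg_one_iff.2 (by omega : p % 4 ≠ 3)
  obtain ⟨a, rfl⟩ := ZMod.ringHom_surjective toZMod r
  have h2 : (2 : ZMod p) ≠ 0 := by
    rw [← Nat.cast_ofNat, Ne, ZMod.natCast_eq_zero_iff,
      Nat.prime_dvd_prime_iff_eq hp.out Nat.prime_two]
    omega
  have ha : toZMod a ≠ 0 := by rintro h; simp [h] at hr
  have hderiv : IsUnit (2 * a) := by
    rw [← IsLocalRing.notMem_maximalIdeal, mem_max, map_mul, map_ofNat]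
    exact mul_ne_zero h2 ha
  obtain ⟨z, hz, -⟩ := HenselianRing.is_henselian (I := IsLocalRing.maximalIdeal ℤ_[p])
    (X ^ 2 + 1 : ℤ_[p][X]) (by monicity!) a (by simp [mem_max, sq, ← hr])
    (by simpa [one_add_one_eq_two] using
      hderiv.map (Ideal.Quotient.mk (IsLocalRing.maximalIdeal ℤ_[p])))
  exact ⟨z, by simpa [eq_neg_iff_add_eq_zero] using hz⟩

theorem ZMod.exists_sq_eq_neg_one_of_mod_four_eq_one {p : ℕ} [Fact p.Prime] (hp1 : p % 4 = 1)
    (n : ℕ) : ∃ j : ZMod (p ^ n), j ^ 2 = -1 := by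
  obtain ⟨z, hz⟩ := PadicInt.exists_sq_eq_neg_one hp1
  exact ⟨PadicInt.toZModPow n z, by rw [← map_pow, hz, map_neg, map_one]⟩

section SumSquaresFactor

variable {R : Type*} [CommRing R] [Invertible (2 : R)]

def sqAddSqFactorEquiv (j : R) (hj : j ^ 2 = -1) : R × R ≃ R × R where
  toFun xy := (xy.1 + j * xy.2, xy.1 - j * xy.2)
  invFun st := (⅟2 * (st.1 + st.2), -⅟2 * j * (st.1 - st.2))
  left_inv := by
    rintro ⟨x, y⟩
    ext
    · linear_combination x * mul_invOf_self (2 : R)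
    · linear_combination (-2 * ⅟2 * y) * hj + y * mul_invOf_self (2 : R)
  right_inv := by
    rintro ⟨s, t⟩
    ext
    · linear_combination (-⅟2 * (s - t)) * hj + s * mul_invOf_self (2 : R)
    · linear_combination (⅟2 * (s - t)) * hj + t * mul_invOf_self (2 : R)

theorem card_sq_add_sq_eq_card_mul (j : R) (hj : j ^ 2 = -1) (P : R → Prop) :
    Nat.card {xy : R × R // P (xy.1 ^ 2 + xy.2 ^ 2)} = Nat.card {st : R × R // P (st.1 * st.2)} :=
  Nat.card_congr <| (sqAddSqFactorEquiv j hj).subtypeEquiv fun xy => by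
    have : (xy.1 + j * xy.2) * (xy.1 - j * xy.2) = xy.1 ^ 2 + xy.2 ^ 2 := by
      linear_combination (-xy.2 ^ 2) * hj
    simp [sqAddSqFactorEquiv, this]

end SumSquaresFactor

theorem card_subtype_prod_eq_sum_card_filter {α β : Type*} [Fintype α] [Fintype β]
    (P : α → β → Prop) [∀ a b, Decidable (P a b)] :
    Nat.card {x : α × β // P x.1 x.2} = ∑ a, #{b | P a b} := by
  rw [Nat.card_eq_fintype_card, Fintype.card_subtype, card_filter, Fintype.sum_prod_type]
  simp only [card_filter]

namespace ZMod

variable {N : ℕ} [NeZero N]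

theorem card_filter_dvd_val {d : ℕ} (hd : d ∣ N) : #{s : ZMod N | d ∣ s.val} = N / d := by
  have : NeZero d := ⟨ne_zero_of_dvd_ne_zero (NeZero.ne N) hd⟩
  let f := (castHom hd (ZMod d)).toAddMonoidHom
  have hindex : f.ker.index = d := by
    rw [AddSubgroup.index_ker, AddMonoidHom.range_eq_top_of_surjective f (castHom_surjective hd),
      AddSubgroup.card_top, Nat.card_zmod]
  have hker := f.ker.card_mul_index
  rw [hindex, Nat.card_zmod] at hker
  have hcard : #{s : ZMod N | d ∣ s.val} = Nat.card f.ker := by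
    rw [Nat.card_eq_fintype_card, Fintype.card_subtype]
    congr! 2 with s
    rw [AddMonoidHom.mem_ker, ← natCast_eq_zero_iff, ← cast_eq_val]
    rfl
  rw [hcard, Nat.div_eq_of_eq_mul_left (Nat.pos_of_neZero d) hker.symm]

theorem mul_eq_zero_iff_addOrderOf_dvd_val (c t : ZMod N) :
    c * t = 0 ↔ addOrderOf c ∣ t.val := by
  rw [addOrderOf_dvd_iff_nsmul_eq_zero, nsmul_eq_mul, natCast_zmod_val, mul_comm]

theorem card_filter_mul_eq_zero (c : ZMod N) : #{t : ZMod N | c * t = 0} = N.gcd c.val := by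
  have hN := NeZero.ne N
  have horder : addOrderOf c = N / N.gcd c.val := by
    conv_lhs => rw [← natCast_zmod_val c]
    exact addOrderOf_coe _ hN
  simp_rw [mul_eq_zero_iff_addOrderOf_dvd_val]
  rw [card_filter_dvd_val (horder ▸ Nat.div_dvd_of_dvd (Nat.gcd_dvd_left _ _)), horder,
    Nat.div_div_self (Nat.gcd_dvd_left _ _) hN]

theorem exists_mul_eq_iff_gcd_dvd_val (c b : ZMod N) :
    (∃ t, c * t = b) ↔ N.gcd c.val ∣ b.val := by
  constructor
  · rintro ⟨t, rfl⟩
    rw [val_mul, Nat.dvd_mod_iff (Nat.gcd_dvd_left _ _)]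
    exact (Nat.gcd_dvd_right _ _).mul_right _
  · rintro ⟨e, he⟩
    refine ⟨c⁻¹ * e, ?_⟩
    rw [← mul_assoc, mul_inv_eq_gcd, Nat.gcd_comm, ← natCast_zmod_val b, he, Nat.cast_mul]

theorem card_filter_mul_eq (c b : ZMod N) :
    #{t : ZMod N | c * t = b} = if N.gcd c.val ∣ b.val then N.gcd c.val else 0 := by
  split_ifs with h
  · obtain ⟨t₀, ht₀⟩ := (exists_mul_eq_iff_gcd_dvd_val c b).2 h
    rw [← card_filter_mul_eq_zero c]
    refine card_equiv (Equiv.subRight t₀) fun t => ?_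
    simp [mul_sub, ht₀, sub_eq_zero]
  · rw [card_eq_zero, filter_eq_empty_iff]
    exact fun t _ ht => h ((exists_mul_eq_iff_gcd_dvd_val c b).1 ⟨t, ht⟩)

end ZMod

/-- Truncated at `n`: the valuation of `0` is `n`. -/
def padicValZMod (p : ℕ) {n : ℕ} (s : ZMod (p ^ n)) : ℕ := padicValNat p ((p ^ n).gcd s.val)

namespace padicValZMod

variable {p n : ℕ} [hp : Fact p.Prime]

theorem gcd_val_eq_pow (s : ZMod (p ^ n)) : (p ^ n).gcd s.val = p ^ padicValZMod p s := by
  obtain ⟨k, -, hk⟩ := (Nat.dvd_prime_pow hp.out).1 (Nat.gcd_dvd_left (p ^ n) s.val)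
  rw [padicValZMod, hk, padicValNat.prime_pow]

theorem le_exponent (s : ZMod (p ^ n)) : padicValZMod p s ≤ n := by
  rw [← Nat.pow_dvd_pow_iff_le_right hp.out.one_lt, ← gcd_val_eq_pow]
  exact Nat.gcd_dvd_left _ _

theorem pow_dvd_val_iff {k : ℕ} (hk : k ≤ n) (s : ZMod (p ^ n)) :
    p ^ k ∣ s.val ↔ k ≤ padicValZMod p s := by
  rw [← Nat.pow_dvd_pow_iff_le_right hp.out.one_lt, ← gcd_val_eq_pow,
    Nat.dvd_gcd_iff, and_iff_right (Nat.pow_dvd_pow p hk)]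

theorem eq_of_forall_pow_dvd_val_iff {s : ZMod (p ^ n)} {m : ℕ} (hm : m ≤ n)
    (h : ∀ k ≤ n, p ^ k ∣ s.val ↔ k ≤ m) : padicValZMod p s = m :=
  le_antisymm (((h _ (le_exponent s)).1 ((pow_dvd_val_iff (le_exponent s) s).2 le_rfl)))
    ((pow_dvd_val_iff hm s).1 ((h m hm).2 le_rfl))

theorem intCast {x : ℤ} (hx : x ≠ 0) :
    padicValZMod p (x : ZMod (p ^ n)) = min n (padicValInt p x) := by
  refine eq_of_forall_pow_dvd_val_iff (min_le_left _ _) fun k hk => ?_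
  rw [← ZMod.natCast_eq_zero_iff, ← ZMod.cast_eq_val, ZMod.cast_intCast (pow_dvd_pow p hk),
    ZMod.intCast_zmod_eq_zero_iff_dvd, Nat.cast_pow, padicValInt_dvd_iff]
  omega

theorem zero : padicValZMod p (0 : ZMod (p ^ n)) = n := by
  simp [padicValZMod]

theorem natCast {x : ℕ} (hx : x ≠ 0) :
    padicValZMod p (x : ZMod (p ^ n)) = min n (padicValNat p x) := by
  simpa using intCast (p := p) (n := n) (Int.natCast_ne_zero.2 hx)

theorem natCast_pow_mul (α : ℕ) (s : ZMod (p ^ n)) :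
    padicValZMod p ((p : ZMod (p ^ n)) ^ α * s) = min n (α + padicValZMod p s) := by
  rcases eq_or_ne s 0 with rfl | hs
  · rw [mul_zero, zero]; omega
  have hval : s.val ≠ 0 := (ZMod.val_ne_zero s).2 hs
  have hs : padicValZMod p s = min n (padicValNat p s.val) := by
    conv_lhs => rw [← ZMod.natCast_zmod_val s]
    exact natCast hval
  have hps : (p : ZMod (p ^ n)) ^ α * s = ((p ^ α * s.val : ℕ) : ZMod (p ^ n)) := by
    rw [Nat.cast_mul, Nat.cast_pow, ZMod.natCast_zmod_val]
  rw [hps, natCast (mul_ne_zero (pow_ne_zero α hp.out.ne_zero) hval),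
    padicValNat.mul (pow_ne_zero α hp.out.ne_zero) hval, padicValNat.prime_pow, hs]
  omega

theorem card_filter_mul_eq (c b : ZMod (p ^ n)) :
    #{t : ZMod (p ^ n) | c * t = b} =
      if padicValZMod p c ≤ padicValZMod p b then p ^ padicValZMod p c else 0 := by
  rw [ZMod.card_filter_mul_eq, gcd_val_eq_pow]
  simp only [pow_dvd_val_iff (le_exponent c)]

theorem card_filter_eq {k : ℕ} (hk : k < n) :
    #{s : ZMod (p ^ n) | padicValZMod p s = k} = p ^ (n - k) - p ^ (n - k - 1) := by
  set D : ℕ → Finset (ZMod (p ^ n)) := fun i => {s | p ^ i ∣ s.val}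
  have hsplit : ({s | padicValZMod p s = k} : Finset (ZMod (p ^ n))) = D k \ D (k + 1) := by
    ext s
    simp only [D, mem_sdiff, mem_filter, mem_univ, true_and, pow_dvd_val_iff hk.le,
      pow_dvd_val_iff (Nat.succ_le_of_lt hk)]
    omega
  have hsub : D (k + 1) ⊆ D k :=
    monotone_filter_right _ fun _ _ => (pow_dvd_pow p k.le_succ).trans
  rw [hsplit, card_sdiff_of_subset hsub, ZMod.card_filter_dvd_val (pow_dvd_pow p hk.le),
    ZMod.card_filter_dvd_val (pow_dvd_pow p hk), Nat.pow_div hk.le hp.out.pos,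
    Nat.pow_div hk hp.out.pos, Nat.sub_sub]

theorem sum_comp (f : ℕ → ℕ) :
    ∑ s : ZMod (p ^ n), f (padicValZMod p s) =
      ∑ k ∈ range (n + 1), #{s : ZMod (p ^ n) | padicValZMod p s = k} * f k := by
  rw [← sum_fiberwise_of_maps_to (g := padicValZMod p) (t := range (n + 1))
    fun s _ => mem_range.2 (Nat.lt_succ_of_le (le_exponent s))]
  refine sum_congr rfl fun k _ => ?_
  rw [sum_congr rfl fun s hs => congrArg f (mem_filter.1 hs).2, sum_const, smul_eq_mul]

end padicValZMod

section Count

variable {p n : ℕ} [Fact p.Prime]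

theorem card_filter_pow_mul_mul_eq_intCast (α : ℕ) {A : ℤ} (hA : A ≠ 0)
    (hν : padicValInt p A < n) (s : ZMod (p ^ n)) :
    #{t : ZMod (p ^ n) | (p : ZMod (p ^ n)) ^ α * s * t = A} =
      if α + padicValZMod p s ≤ padicValInt p A then p ^ (α + padicValZMod p s) else 0 := by
  rw [padicValZMod.card_filter_mul_eq, padicValZMod.natCast_pow_mul, padicValZMod.intCast hA]
  by_cases h : α + padicValZMod p s ≤ padicValInt p A
  · rw [if_pos (by omega), if_pos h, min_eq_right (by omega)]
  · rw [if_neg (by omega), if_neg h]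

theorem sum_ite_pow_padicValZMod {α ν : ℕ} (hν : ν < n) :
    ∑ s : ZMod (p ^ n),
        (if α + padicValZMod p s ≤ ν then p ^ (α + padicValZMod p s) else 0) =
      (1 + ν - α) * (p ^ (n + α) - p ^ (n + α - 1)) := by
  have hrange : ({k ∈ range (n + 1) | α + k ≤ ν} : Finset ℕ) = range (1 + ν - α) := by
    ext k
    simp only [mem_filter, mem_range]
    omega
  have hterm : ∀ k ∈ range (1 + ν - α),
      #{s : ZMod (p ^ n) | padicValZMod p s = k} * p ^ (α + k) =
        p ^ (n + α) - p ^ (n + α - 1) := by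
    intro k hk
    rw [mem_range] at hk
    rw [padicValZMod.card_filter_eq (by omega), Nat.sub_mul, ← pow_add, ← pow_add]
    congr 2 <;> omega
  rw [padicValZMod.sum_comp fun k => if α + k ≤ ν then p ^ (α + k) else 0]
  simp only [mul_ite, mul_zero]
  rw [← sum_filter, hrange, sum_congr rfl hterm, sum_const, card_range, smul_eq_mul]

end Count

theorem count_shifted_sum_two_squares_one_mod_four_general (p n α : ℕ) (hp : p.Prime)
    (hp1 : p % 4 = 1) (A : ℤ) (hA : A ≠ 0)
    (hν : padicValInt p A < n) :
    Nat.card {xy : ZMod (p ^ n) × ZMod (p ^ n) //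
        (p : ZMod (p ^ n)) ^ α * (xy.1 ^ 2 + xy.2 ^ 2) = (A : ZMod (p ^ n))}
      = (1 + padicValInt p A - α) * (p ^ (n + α) - p ^ (n + α - 1)) := by
  have := Fact.mk hp
  obtain ⟨j, hj⟩ := ZMod.exists_sq_eq_neg_one_of_mod_four_eq_one hp1 n
  have h2 : IsUnit (2 : ZMod (p ^ n)) := by
    simpa using (ZMod.isUnit_prime_iff_not_dvd Nat.prime_two).2 fun h => by
      have := Nat.prime_two.dvd_of_dvd_pow h
      omega
  let := h2.invertible
  rw [card_sq_add_sq_eq_card_mul j hj fun m => (p : ZMod (p ^ n)) ^ α * m = A,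
    card_subtype_prod_eq_sum_card_filter fun s t => (p : ZMod (p ^ n)) ^ α * (s * t) = A]
  simp only [← mul_assoc, card_filter_pow_mul_mul_eq_intCast α hA hν]
  exact sum_ite_pow_padicValZMod hν

/-- The value of `S_α(A; pⁿ)` for `p ≡ 1 (mod 4)` and `α ≤ ν_p(A) < n`. -/
theorem count_shifted_sum_two_squares_one_mod_four (p n α : ℕ) (hp : p.Prime)
    (hp1 : p % 4 = 1) (A : ℤ) (hA : A ≠ 0)
    (hα : α ≤ padicValInt p A) (hν : padicValInt p A < n) :
    Nat.card {xy : ZMod (p ^ n) × ZMod (p ^ n) //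
        (p : ZMod (p ^ n)) ^ α * (xy.1 ^ 2 + xy.2 ^ 2) = (A : ZMod (p ^ n))}
      = (1 + padicValInt p A - α) * (p ^ (n + α) - p ^ (n + α - 1)) :=
  count_shifted_sum_two_squares_one_mod_four_general p n α hp hp1 A hA hν
end

section
/- Let η = 1 − (1 + log log 2)/log 2 (where log is the natural logarithm), and Q(λ) = λ log λ − λ + 1. Then Q(1/log 2) = η and 2·Q(1/(2 log 2)) = η; moreover max over λ ∈ (1, 2) of min{Q(λ), 2Q(λ/2)} equals η. -/
/-!
`Q` is increasing on `[1, ∞)` and decreasing on `[0, 1]`, so on `(1, 2)` the function `Q` increases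
while `λ ↦ 2 Q(λ/2)` decreases. The minimum of the two is therefore largest where they cross, and
they cross at `λ = 1 / log 2`, where both equal `η`.
-/

open Real Set

/-- The Cramér rate function of the Poisson law with mean `1`. -/
noncomputable def Q (l : ℝ) : ℝ := l * log l - l + 1

theorem continuous_Q : Continuous Q :=
  (continuous_mul_log.sub continuous_id).add continuous_const

theorem hasDerivAt_Q {x : ℝ} (hx : x ≠ 0) : HasDerivAt Q (log x) x := by
  have h := ((hasDerivAt_mul_log hx).sub (hasDerivAt_id x)).add_const 1
  rwa [add_sub_cancel_right] at h

theorem monotoneOn_Q : MonotoneOn Q (Ici 1) := by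
  refine monotoneOn_of_deriv_nonneg (convex_Ici 1) continuous_Q.continuousOn ?_ ?_ <;>
    rw [interior_Ici] <;> intro x (hx : 1 < x)
  · exact (hasDerivAt_Q (by positivity)).differentiableAt.differentiableWithinAt
  · rw [(hasDerivAt_Q (by positivity)).deriv]
    exact log_nonneg hx.le

theorem antitoneOn_Q : AntitoneOn Q (Icc 0 1) := by
  refine antitoneOn_of_deriv_nonpos (convex_Icc 0 1) continuous_Q.continuousOn ?_ ?_ <;>
    rw [interior_Icc] <;> rintro x ⟨hx0, hx1⟩
  · exact (hasDerivAt_Q hx0.ne').differentiableAt.differentiableWithinAt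
  · rw [(hasDerivAt_Q hx0.ne').deriv]
    exact log_nonpos hx0.le hx1.le

theorem antitoneOn_two_mul_Q_half : AntitoneOn (fun l ↦ 2 * Q (l / 2)) (Icc 0 2) := by
  rintro a ⟨ha0, ha2⟩ b ⟨hb0, hb2⟩ hab
  have := antitoneOn_Q ⟨by linarith, by linarith⟩ ⟨by linarith, by linarith⟩
    (div_le_div_of_nonneg_right hab zero_le_two)
  dsimp only
  linarith

theorem Q_one_div (x : ℝ) : Q (1 / x) = 1 - (1 + log x) / x := by
  rw [Q, one_div, log_inv]
  ring

theorem two_mul_Q_one_div_two_mul_log_two :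
    2 * Q (1 / (2 * log 2)) = 1 - (1 + log (log 2)) / log 2 := by
  rw [Q_one_div, log_mul two_ne_zero (log_pos one_lt_two).ne']
  field_simp
  ring

theorem isGreatest_image_min_of_monotoneOn_of_antitoneOn {α β : Type*} [LinearOrder α]
    [LinearOrder β] {f g : α → β} {s : Set α} {a : α} {c : β} (hf : MonotoneOn f s)
    (hg : AntitoneOn g s) (ha : a ∈ s) (hfa : f a = c) (hga : g a = c) :
    IsGreatest ((fun x ↦ min (f x) (g x)) '' s) c := by
  refine ⟨⟨a, ha, by simp [hfa, hga]⟩, ?_⟩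
  rintro _ ⟨x, hx, rfl⟩
  rcases le_total x a with hxa | hax
  · exact (min_le_left _ _).trans (hfa ▸ hf hx ha hxa)
  · exact (min_le_right _ _).trans (hga ▸ hg ha hx hax)

theorem one_lt_one_div_log_two : 1 < 1 / log 2 := by
  rw [lt_one_div one_pos (log_pos one_lt_two), div_one]
  linarith [log_two_lt_d9]

theorem one_div_log_two_lt_two : 1 / log 2 < 2 := by
  rw [div_lt_iff₀ (log_pos one_lt_two)]
  linarith [log_two_gt_d9]

theorem eta_as_max_min :
    ((1 / Real.log 2) * Real.log (1 / Real.log 2) - 1 / Real.log 2 + 1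
        = 1 - (1 + Real.log (Real.log 2)) / Real.log 2)
    ∧ (2 * ((1 / (2 * Real.log 2)) * Real.log (1 / (2 * Real.log 2)) - 1 / (2 * Real.log 2) + 1)
        = 1 - (1 + Real.log (Real.log 2)) / Real.log 2)
    ∧ IsGreatest
        ((fun l : ℝ => min (l * Real.log l - l + 1) (2 * ((l / 2) * Real.log (l / 2) - l / 2 + 1))) ''
          Set.Ioo 1 2)
        (1 - (1 + Real.log (Real.log 2)) / Real.log 2) := by
  have hQ : Q (1 / log 2) = 1 - (1 + log (log 2)) / log 2 := Q_one_div _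
  refine ⟨hQ, two_mul_Q_one_div_two_mul_log_two, ?_⟩
  show IsGreatest ((fun l ↦ min (Q l) (2 * Q (l / 2))) '' Ioo 1 2) _
  refine isGreatest_image_min_of_monotoneOn_of_antitoneOn
    (monotoneOn_Q.mono fun x hx ↦ le_of_lt hx.1)
    (antitoneOn_two_mul_Q_half.mono fun x hx ↦ ⟨by linarith [hx.1], hx.2.le⟩)
    ⟨one_lt_one_div_log_two, one_div_log_two_lt_two⟩ hQ ?_
  show 2 * Q (1 / log 2 / 2) = _
  rw [div_div, mul_comm (log 2)]
  exact two_mul_Q_one_div_two_mul_log_two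
end
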